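/- Let γ ∈ W^{2,2}([0,L]; ℝ²) be arc-length parametrised and smooth with signed curvature k satisfying 2k'' + k³ − λk = 0, and suppose the boundary term [2k(N,η') − (2k'N + (k²+λ)T, η)]₀^L vanishes for every smooth η : [0,L] → ℝ² with (η(0), e₁) = (η(L), e₁) = (η'(0), e₂) = (η'(L), e₂) = 0. Then k'(0) = 0 and k'(L) = 0. -/

import Mathlib

/-- Boundary term of the first variation of `E^λ = B + λL` at parameter `s`,
evaluated against a variation with value `η` and derivative `η'` at `s`:
`2k (N, η') − (2k' N + (k² + λ) T, η)`, where `T = γ'` and `N = rot T`. -/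
noncomputable def bterm (γ : ℝ → ℝ × ℝ) (k : ℝ → ℝ) (lam s : ℝ)
    (η η' : ℝ × ℝ) : ℝ :=
  2 * k s * ((-(deriv γ s).2) * η'.1 + (deriv γ s).1 * η'.2)
    - ((2 * deriv k s * (-(deriv γ s).2) + ((k s) ^ 2 + lam) * (deriv γ s).1) * η.1
      + (2 * deriv k s * (deriv γ s).1 + ((k s) ^ 2 + lam) * (deriv γ s).2) * η.2)

theorem no_flux_condition (L lam : ℝ) (hL : 0 < L)
    (γ : ℝ → ℝ × ℝ) (k : ℝ → ℝ)
    (hγ : ContDiff ℝ (⊤ : ℕ∞) γ) (hk : ContDiff ℝ (⊤ : ℕ∞) k)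
    (harc : ∀ s : ℝ, (deriv γ s).1 ^ 2 + (deriv γ s).2 ^ 2 = 1)
    (hcurv : ∀ s : ℝ,
      deriv (deriv γ) s = (-(k s) * (deriv γ s).2, k s * (deriv γ s).1))
    (hode : ∀ s : ℝ, 2 * deriv (deriv k) s + (k s) ^ 3 - lam * k s = 0)
    (hbc0 : deriv γ 0 = (1, 0) ∨ deriv γ 0 = (-1, 0))
    (hbcL : deriv γ L = (1, 0) ∨ deriv γ L = (-1, 0))
    (hbt : ∀ η : ℝ → ℝ × ℝ, ContDiff ℝ (⊤ : ℕ∞) η →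
      (η 0).1 = 0 → (η L).1 = 0 → (deriv η 0).2 = 0 → (deriv η L).2 = 0 →
      bterm γ k lam L (η L) (deriv η L) - bterm γ k lam 0 (η 0) (deriv η 0) = 0) :
    deriv k 0 = 0 ∧ deriv k L = 0 := by
  have hL3 : L ^ 3 ≠ 0 := by positivity
  -- first test function: constant (0,1)
  set η₁ : ℝ → ℝ × ℝ := fun _ => ((0:ℝ), (1:ℝ)) with hη₁
  have hd1 : ∀ s, deriv η₁ s = 0 := fun s => deriv_const s _
  have h1 := hbt η₁ contDiff_const rfl rfl (by rw [hd1]; rfl) (by rw [hd1]; rfl)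
  rw [hd1, hd1] at h1
  -- second test function: (0, f s) with cubic f
  set f : ℝ → ℝ := fun s => (3 * L * s ^ 2 - 2 * s ^ 3) / L ^ 3 with hf
  have hf' : ∀ s, HasDerivAt f ((3 * L * (2 * s) - 2 * (3 * s ^ 2)) / L ^ 3) s := by
    intro s
    exact (((hasDerivAt_pow 2 s).const_mul (3 * L)).sub
      ((hasDerivAt_pow 3 s).const_mul 2)).div_const _ |>.congr_deriv (by ring_nf)
  set η₂ : ℝ → ℝ × ℝ := fun s => ((0:ℝ), f s) with hη₂
  have hd2 : ∀ s, deriv η₂ s = (0, (3 * L * (2 * s) - 2 * (3 * s ^ 2)) / L ^ 3) := by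
    intro s
    exact ((hasDerivAt_const s (0:ℝ)).prodMk (hf' s)).deriv
  have hc2 : ContDiff ℝ (⊤ : ℕ∞) η₂ := by
    apply contDiff_const.prodMk
    apply ContDiff.div_const
    fun_prop
  have hf0 : f 0 = 0 := by simp [hf]
  have hfL : f L = 1 := by
    simp only [hf]
    field_simp; ring
  have hz : (3 * L * (2 * L) - 2 * (3 * L ^ 2)) / L ^ 3 = 0 := by
    rw [div_eq_zero_iff]; left; ring
  have h2 := hbt η₂ hc2 rfl rfl
    (by rw [hd2]; simp) (by rw [hd2]; simpa using hz)
  rw [hd2, hd2] at h2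
  simp only [hη₂, hf0, hfL, hz] at h2
  rcases hbc0 with h0 | h0 <;> rcases hbcL with hLc | hLc <;>
    simp only [bterm, h0, hLc, hη₁] at h1 h2 <;>
    norm_num at h1 h2 <;>
    constructor <;> linarith
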